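/- arXiv:1812.04057 — 6 statements merged into one kernel-verified Lean document; each statement's English description precedes it below -/
import Mathlib

section
/- Let q ≥ 1 and s ≥ 1 be integers, m = 2s, and let T : (Fin m → Fin q) → ℂ be a perfect (balanced-unitary) tensor. Then for every subset I ⊆ Fin m with |I| ≤ s and all assignments a, a' : I → Fin q one has ∑_{b : Iᶜ → Fin q} T(a ⊔ b) · conj(T(a' ⊔ b)) = q^{s − |I|} if a = a', and = 0 otherwise; equivalently, (T_I)ᴴ · T_I = q^{s−|I|} · 1, so T_I is a scaled isometry for every bipartition of the indices with |I| ≤ |Iᶜ|. -/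
/-- Combine an assignment on a finite index subset `I` with an assignment on its
complement into a full assignment. -/
def glue {ι α : Type*} [Fintype ι] [DecidableEq ι] (I : Finset ι)
    (a : {i // i ∈ I} → α) (b : {i // i ∈ Iᶜ} → α) : ι → α :=
  fun x => if h : x ∈ I then a ⟨x, h⟩ else b ⟨x, Finset.mem_compl.mpr h⟩

/-- If `T` is a perfect (balanced-unitary) tensor with `m = 2s` indices, then for every subset
`I` of the indices with `|I| ≤ s`, the matrix `T_I` is a scaled isometry:
`∑_b T(a ⊔ b) ⬝ conj (T(a' ⊔ b)) = q^(s - |I|)` if `a = a'` and `0` otherwise. -/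
theorem perfect_tensor_unbalanced_isometry
    (q s : ℕ) (hq : 1 ≤ q) (hs : 1 ≤ s) (m : ℕ) (hm : m = 2 * s)
    (T : (Fin m → Fin q) → ℂ)
    (hperf : ∀ I : Finset (Fin m), I.card = s →
      ∀ a a' : {i // i ∈ I} → Fin q,
        ∑ b : {i // i ∈ Iᶜ} → Fin q,
          T (glue I a b) * (starRingEnd ℂ) (T (glue I a' b)) =
            if a = a' then 1 else 0) :
    ∀ I : Finset (Fin m), I.card ≤ s →
      ∀ a a' : {i // i ∈ I} → Fin q,
        ∑ b : {i // i ∈ Iᶜ} → Fin q,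
          T (glue I a b) * (starRingEnd ℂ) (T (glue I a' b)) =
            if a = a' then (q : ℂ) ^ (s - I.card) else 0 := by
  classical
  intro I hI a a'
  obtain ⟨J, hIJ, -, hJcard⟩ :=
    Finset.exists_subsuperset_card_eq (I.subset_univ) hI
      (by simp [hm]; omega)
  -- combine an assignment on `I` with one on `J \ I` into one on `J`
  set A : ({i // i ∈ I} → Fin q) → ({i // i ∈ J \ I} → Fin q) → {i // i ∈ J} → Fin q :=
    fun a c x => if h : (x : Fin m) ∈ I then a ⟨x, h⟩
      else c ⟨x, Finset.mem_sdiff.mpr ⟨x.2, h⟩⟩ with hA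
  -- equivalence splitting `Iᶜ` into `J \ I` and `Jᶜ`
  let e0 : {i : Fin m // i ∈ Iᶜ} ≃ {i : Fin m // i ∈ J \ I} ⊕ {i : Fin m // i ∈ Jᶜ} :=
  { toFun := fun x => if h : (x : Fin m) ∈ J then
        Sum.inl ⟨x, Finset.mem_sdiff.mpr ⟨h, Finset.mem_compl.mp x.2⟩⟩
      else Sum.inr ⟨x, Finset.mem_compl.mpr h⟩
    invFun := fun y => match y with
      | Sum.inl z => ⟨z.1, Finset.mem_compl.mpr fun h => (Finset.mem_sdiff.mp z.2).2 h⟩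
      | Sum.inr z => ⟨z.1, Finset.mem_compl.mpr fun h => Finset.mem_compl.mp z.2 (hIJ h)⟩
    left_inv := by
      intro x
      by_cases h : (x : Fin m) ∈ J <;> simp [h]
    right_inv := by
      rintro (z | z)
      · simp [(Finset.mem_sdiff.mp z.2).1]
      · simp [Finset.mem_compl.mp z.2] }
  let e : ({i : Fin m // i ∈ Iᶜ} → Fin q) ≃
      ({i : Fin m // i ∈ J \ I} → Fin q) × ({i : Fin m // i ∈ Jᶜ} → Fin q) :=
    (Equiv.arrowCongr e0 (Equiv.refl _)).trans (Equiv.sumArrowEquivProdArrow _ _ _)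
  have key : ∀ (a : {i // i ∈ I} → Fin q) (c : {i // i ∈ J \ I} → Fin q)
      (d : {i // i ∈ Jᶜ} → Fin q),
      glue I a (e.symm (c, d)) = glue J (A a c) d := by
    intro a c d
    funext x
    by_cases hx : x ∈ I
    · have hxJ : x ∈ J := hIJ hx
      simp [glue, hx, hxJ, hA]
    · by_cases hxJ : x ∈ J
      · simp [glue, hx, hxJ, hA, e, e0, Equiv.sumArrowEquivProdArrow]
      · simp [glue, hx, hxJ, hA, e, e0, Equiv.sumArrowEquivProdArrow]
  calc ∑ b : {i // i ∈ Iᶜ} → Fin q,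
          T (glue I a b) * (starRingEnd ℂ) (T (glue I a' b))
      = ∑ p : ({i : Fin m // i ∈ J \ I} → Fin q) × ({i : Fin m // i ∈ Jᶜ} → Fin q),
          T (glue I a (e.symm p)) * (starRingEnd ℂ) (T (glue I a' (e.symm p))) :=
        (Equiv.sum_comp e.symm _).symm
    _ = ∑ c : {i : Fin m // i ∈ J \ I} → Fin q, ∑ d : {i : Fin m // i ∈ Jᶜ} → Fin q,
          T (glue J (A a c) d) * (starRingEnd ℂ) (T (glue J (A a' c) d)) := by
        rw [Fintype.sum_prod_type]
        exact Finset.sum_congr rfl fun c _ => Finset.sum_congr rfl fun d _ => by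
          rw [key, key]
    _ = ∑ c : {i : Fin m // i ∈ J \ I} → Fin q,
          (if A a c = A a' c then (1 : ℂ) else 0) :=
        Finset.sum_congr rfl fun c _ => hperf J hJcard _ _
    _ = ∑ c : {i : Fin m // i ∈ J \ I} → Fin q, (if a = a' then (1 : ℂ) else 0) := by
        refine Finset.sum_congr rfl fun c _ => ?_
        congr 1
        simp only [eq_iff_iff]
        constructor
        · intro h
          funext i
          have := congrFun h ⟨i, hIJ i.2⟩
          simpa [hA, i.2] using this
        · intro h; rw [h]
    _ = if a = a' then (q : ℂ) ^ (s - I.card) else 0 := by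
        rw [Finset.sum_const, Finset.card_univ, Fintype.card_fun,
          Fintype.card_coe, Fintype.card_fin, Finset.card_sdiff_of_subset hIJ, hJcard]
        split <;> simp [mul_comm]
end

section
/- Let q ≥ 1 and s ≥ 1 be integers, m = 2s, and let T : (Fin m → Fin q) → ℂ be a perfect (balanced-unitary) tensor. Let B ⊆ Fin m with |B| = c, let A = Bᶜ, and define the normalized reduced density matrix ρ over A by ρ(a, a') = q^{−s} ∑_{b : B → Fin q} T(a ⊔ b) · conj(T(a' ⊔ b)). Then: (i) ρ is Hermitian and positive semidefinite with trace 1; (ii) if m − c ≤ s (at least half the indices are traced out), ρ = q^{−(m−c)} · 1, the maximally mixed matrix; (iii) if c < s (fewer than half the indices are traced out), ρ · ρ = q^{−c} · ρ and rank ρ = q^c, so ρ has exactly q^c nonzero eigenvalues, each equal to q^{−c}. -/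
/-!
Write `T_D` for the flattening of `T` at `D`, so that `ρ = q^{-s} T_B T_Bᴴ`; this gives
positivity, and the trace is `q^{-s} ∑ₓ |T x|²`, which perfectness at any `s`-set evaluates
to `q^s`.

If `T_I` is an isometry and `D ⊆ I`, splitting an assignment on `Dᶜ` into its parts on `I \ D`
and on `Iᶜ` shows `T_Dᴴ T_D = q^{|I \ D|} • 1`. For `|Bᶜ| ≤ s` apply this to `D = Bᶜ`:
`T_B T_Bᴴ` is the transpose of `T_{Bᶜ}ᴴ T_{Bᶜ}`, so `ρ` is a multiple of `1`. For `c < s`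
apply it to `D = B`: then `T_B` is a scaled isometry, whence `ρ² = q^{-c} ρ` and
`rank ρ = rank (T_Bᴴ T_B) = q^c`.
-/

open scoped ComplexOrder

open Finset Matrix

variable {ι α : Type*} [DecidableEq ι]

def glueWithin {D I : Finset ι} (d : {i // i ∈ D} → α) (g : {i // i ∈ I \ D} → α) :
    {i // i ∈ I} → α :=
  fun i => if h : i.1 ∈ D then d ⟨i, h⟩ else g ⟨i, mem_sdiff.2 ⟨i.2, h⟩⟩

lemma glueWithin_left_injective {D I : Finset ι} (hDI : D ⊆ I) (g : {i // i ∈ I \ D} → α) :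
    Function.Injective fun d : {i // i ∈ D} → α => glueWithin d g := by
  intro d d' h
  funext j
  simpa [glueWithin, j.2] using congrFun h ⟨j, hDI j.2⟩

variable [Fintype ι]

/-- The matrix `T_I` of the informal statement. -/
def flattening (T : (ι → α) → ℂ) (I : Finset ι) :
    Matrix ({i // i ∈ Iᶜ} → α) ({i // i ∈ I} → α) ℂ :=
  Matrix.of fun b a => T (glue I a b)

def glueEquiv (I : Finset ι) :
    ({i // i ∈ I} → α) × ({i // i ∈ Iᶜ} → α) ≃ (ι → α) where
  toFun p := glue I p.1 p.2
  invFun x := (fun i => x i, fun i => x i)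
  left_inv p := by
    ext i
    · simp [glue, i.2]
    · simp [glue, mem_compl.mp i.2]
  right_inv x := by
    funext i
    by_cases h : i ∈ I <;> simp [glue, h]

lemma glue_compl (B : Finset ι) (b : {i // i ∈ B} → α) (a : {i // i ∈ Bᶜ} → α) :
    glue Bᶜ a (fun i => b ⟨i, by simpa using i.2⟩) = glue B b a := by
  funext x
  by_cases hx : x ∈ B <;> simp [glue, hx]

def complEquivOfSubset {D I : Finset ι} (hDI : D ⊆ I) :
    ({i // i ∈ I \ D} → α) × ({i // i ∈ Iᶜ} → α) ≃ ({i // i ∈ Dᶜ} → α) where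
  toFun p i := if h : i.1 ∈ I then p.1 ⟨i, mem_sdiff.2 ⟨h, mem_compl.1 i.2⟩⟩
    else p.2 ⟨i, mem_compl.2 h⟩
  invFun e := (fun i => e ⟨i, mem_compl.2 (mem_sdiff.1 i.2).2⟩,
    fun i => e ⟨i, mem_compl.2 fun h => mem_compl.1 i.2 (hDI h)⟩)
  left_inv p := by
    ext i
    · simp [(mem_sdiff.1 i.2).1]
    · simp [mem_compl.1 i.2]
  right_inv e := by
    funext i
    dsimp only
    split <;> rfl

lemma glue_complEquivOfSubset {D I : Finset ι} (hDI : D ⊆ I) (d : {i // i ∈ D} → α)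
    (g : {i // i ∈ I \ D} → α) (f : {i // i ∈ Iᶜ} → α) :
    glue D d (complEquivOfSubset hDI (g, f)) = glue I (glueWithin d g) f := by
  funext x
  by_cases hxD : x ∈ D
  · simp [glue, glueWithin, hxD, hDI hxD]
  · by_cases hxI : x ∈ I <;> simp [glue, glueWithin, complEquivOfSubset, hxD, hxI]

variable [Fintype α] {T : (ι → α) → ℂ}

lemma conjTranspose_flattening_mul_flattening_apply (I : Finset ι) (a a' : {i // i ∈ I} → α) :
    ((flattening T I)ᴴ * flattening T I) a a' =
      ∑ b, star (T (glue I a b)) * T (glue I a' b) := by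
  simp [flattening, mul_apply]

lemma conjTranspose_flattening_mul_flattening_eq_one [DecidableEq α] {I : Finset ι}
    (h : ∀ a a' : {i // i ∈ I} → α,
      ∑ b : {i // i ∈ Iᶜ} → α, T (glue I a b) * star (T (glue I a' b)) =
        if a = a' then 1 else 0) :
    (flattening T I)ᴴ * flattening T I = 1 := by
  ext a a'
  simp_rw [conjTranspose_flattening_mul_flattening_apply, mul_comm (star _), h, one_apply, eq_comm]

lemma trace_conjTranspose_flattening_mul_flattening (I : Finset ι) :
    ((flattening T I)ᴴ * flattening T I).trace = ∑ x, star (T x) * T x := by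
  simp_rw [trace, diag_apply, conjTranspose_flattening_mul_flattening_apply,
    ← Fintype.sum_prod_type', ← (glueEquiv I).sum_comp]
  rfl

lemma flattening_mul_conjTranspose_flattening (B : Finset ι) :
    flattening T B * (flattening T B)ᴴ = ((flattening T Bᶜ)ᴴ * flattening T Bᶜ)ᵀ := by
  ext a a'
  rw [transpose_apply, conjTranspose_flattening_mul_flattening_apply]
  let e : ({i // i ∈ B} → α) ≃ ({i // i ∈ Bᶜᶜ} → α) :=
    { toFun := fun b i => b ⟨i, by simpa using i.2⟩
      invFun := fun b i => b ⟨i, by simp⟩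
      left_inv := fun _ => rfl
      right_inv := fun _ => rfl }
  refine Fintype.sum_equiv e _ _ fun b => ?_
  change T (glue B b a) * star (T (glue B b a')) = _
  rw [mul_comm, ← glue_compl B b a, ← glue_compl B b a']
  rfl

theorem conjTranspose_flattening_mul_flattening_of_subset [DecidableEq α]
    {D I : Finset ι} (hDI : D ⊆ I) (hI : (flattening T I)ᴴ * flattening T I = 1) :
    (flattening T D)ᴴ * flattening T D = ((Fintype.card α : ℂ) ^ #(I \ D)) • 1 := by
  ext d d'
  calc ((flattening T D)ᴴ * flattening T D) d d'
      = ∑ g : {i // i ∈ I \ D} → α, ∑ f : {i // i ∈ Iᶜ} → α,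
          star (T (glue I (glueWithin d g) f)) * T (glue I (glueWithin d' g) f) := by
        rw [conjTranspose_flattening_mul_flattening_apply, ← (complEquivOfSubset hDI).sum_comp,
          Fintype.sum_prod_type]
        simp only [glue_complEquivOfSubset]
    _ = ∑ g : {i // i ∈ I \ D} → α,
          (1 : Matrix _ _ ℂ) (glueWithin d g) (glueWithin d' g) := by
        simp only [← hI, conjTranspose_flattening_mul_flattening_apply]
    _ = ((Fintype.card α : ℂ) ^ #(I \ D) • (1 : Matrix _ _ ℂ)) d d' := by
        simp only [one_apply, (glueWithin_left_injective hDI _).eq_iff, sum_const, card_univ,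
          Fintype.card_fun, Fintype.card_coe, Matrix.smul_apply]
        split_ifs <;> simp [*]

theorem reduced_density_matrix_of_perfect_tensor_general
    (q s : ℕ) (hq : 1 ≤ q) (m : ℕ) (hm : m = 2 * s)
    (T : (Fin m → Fin q) → ℂ)
    (hperf : ∀ I : Finset (Fin m), I.card = s →
      ∀ a a' : {i // i ∈ I} → Fin q,
        ∑ b : {i // i ∈ Iᶜ} → Fin q,
          T (glue I a b) * (starRingEnd ℂ) (T (glue I a' b)) =
            if a = a' then 1 else 0)
    (B : Finset (Fin m)) (c : ℕ) (hc : B.card = c)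
    (ρ : Matrix ({i // i ∈ Bᶜ} → Fin q) ({i // i ∈ Bᶜ} → Fin q) ℂ)
    (hρ : ∀ a a' : {i // i ∈ Bᶜ} → Fin q,
      ρ a a' = ((q : ℂ) ^ s)⁻¹ *
        ∑ b : {i // i ∈ B} → Fin q,
          T (glue B b a) * (starRingEnd ℂ) (T (glue B b a'))) :
    (ρ.IsHermitian ∧ ρ.PosSemidef ∧ ρ.trace = 1) ∧
    (m - c ≤ s →
      ρ = ((q : ℂ) ^ (m - c))⁻¹ •
        (1 : Matrix ({i // i ∈ Bᶜ} → Fin q) ({i // i ∈ Bᶜ} → Fin q) ℂ)) ∧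
    (c < s → ρ * ρ = ((q : ℂ) ^ c)⁻¹ • ρ ∧ ρ.rank = q ^ c) := by
  set M := flattening T B
  have hq0 : (q : ℂ) ≠ 0 := Nat.cast_ne_zero.mpr (by omega)
  have hρM : ρ = ((q : ℂ) ^ s)⁻¹ • (M * Mᴴ) := by
    ext a a'
    simp [hρ, M, flattening, mul_apply]
  have hiso : ∀ {D I : Finset (Fin m)}, D ⊆ I → #I = s →
      (flattening T D)ᴴ * flattening T D = ((q : ℂ) ^ (s - #D)) • 1 := fun hDI hI => by
    rw [conjTranspose_flattening_mul_flattening_of_subset hDI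
      (conjTranspose_flattening_mul_flattening_eq_one (hperf _ hI)), card_sdiff_of_subset hDI,
      hI, Fintype.card_fin]
  have hPSD : ρ.PosSemidef := hρM ▸ (posSemidef_self_mul_conjTranspose M).smul (by positivity)
  refine ⟨⟨hPSD.isHermitian, hPSD, ?_⟩, fun hcs => ?_, fun hcs => ?_⟩
  · obtain ⟨I, -, hI⟩ :=
      exists_subset_card_eq (s := (univ : Finset (Fin m))) (n := s) (by simp; omega)
    rw [hρM, trace_smul, trace_mul_comm, trace_conjTranspose_flattening_mul_flattening,
      ← trace_conjTranspose_flattening_mul_flattening I, hiso (subset_refl I) hI]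
    simp [hI, hq0]
  · have hcB : #Bᶜ = m - c := by rw [card_compl, hc, Fintype.card_fin]
    obtain ⟨I, hBI, -, hI⟩ :=
      exists_subsuperset_card_eq (subset_univ Bᶜ) (n := s) (by omega) (by simp; omega)
    rw [hρM, flattening_mul_conjTranspose_flattening, hiso hBI hI, transpose_smul, transpose_one,
      smul_smul, hcB, pow_sub₀ _ hq0 hcs, inv_mul_cancel_left₀ (pow_ne_zero _ hq0)]
  · obtain ⟨I, hBI, -, hI⟩ :=
      exists_subsuperset_card_eq (subset_univ B) (n := s) (by omega) (by simp; omega)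
    constructor
    · rw [hρM, smul_mul_smul, Matrix.mul_assoc, ← Matrix.mul_assoc Mᴴ, hiso hBI hI,
        Matrix.smul_mul, Matrix.one_mul, Matrix.mul_smul, smul_smul, smul_smul, hc,
        pow_sub₀ _ hq0 hcs.le]
      field_simp
    · rw [hρM,
        rank_smul_of_mem_nonZeroDivisors _ (mem_nonZeroDivisors_of_ne_zero (by simp [hq0])),
        rank_self_mul_conjTranspose, ← rank_conjTranspose_mul_self, hiso hBI hI,
        rank_smul_of_mem_nonZeroDivisors _ (mem_nonZeroDivisors_of_ne_zero (by simp [hq0])),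
        rank_one]
      simp [hc]

/-- The normalized reduced density matrix of the state of a perfect (balanced-unitary)
tensor `T` on `m = 2s` indices, obtained by tracing out a set `B` of `c` indices:
it is Hermitian, positive semidefinite, of unit trace; it is maximally mixed when at least
half of the indices are traced out (`m - c ≤ s`); and when fewer than half the indices are
traced out (`c < s`) it satisfies `ρ·ρ = q^(-c)·ρ` and has rank `q^c`, so it has exactly
`q^c` nonzero eigenvalues, each equal to `q^(-c)`. -/
theorem reduced_density_matrix_of_perfect_tensor
    (q s : ℕ) (hq : 1 ≤ q) (hs : 1 ≤ s) (m : ℕ) (hm : m = 2 * s)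
    (T : (Fin m → Fin q) → ℂ)
    (hperf : ∀ I : Finset (Fin m), I.card = s →
      ∀ a a' : {i // i ∈ I} → Fin q,
        ∑ b : {i // i ∈ Iᶜ} → Fin q,
          T (glue I a b) * (starRingEnd ℂ) (T (glue I a' b)) =
            if a = a' then 1 else 0)
    (B : Finset (Fin m)) (c : ℕ) (hc : B.card = c)
    (ρ : Matrix ({i // i ∈ Bᶜ} → Fin q) ({i // i ∈ Bᶜ} → Fin q) ℂ)
    (hρ : ∀ a a' : {i // i ∈ Bᶜ} → Fin q,
      ρ a a' = ((q : ℂ) ^ s)⁻¹ *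
        ∑ b : {i // i ∈ B} → Fin q,
          T (glue B b a) * (starRingEnd ℂ) (T (glue B b a'))) :
    (ρ.IsHermitian ∧ ρ.PosSemidef ∧ ρ.trace = 1) ∧
    (m - c ≤ s →
      ρ = ((q : ℂ) ^ (m - c))⁻¹ •
        (1 : Matrix ({i // i ∈ Bᶜ} → Fin q) ({i // i ∈ Bᶜ} → Fin q) ℂ)) ∧
    (c < s → ρ * ρ = ((q : ℂ) ^ c)⁻¹ • ρ ∧ ρ.rank = q ^ c) :=
  reduced_density_matrix_of_perfect_tensor_general q s hq m hm T hperf B c hc ρ hρ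
end

section
/- Let p be a prime and x₁, x₂, x₃, x₄ ∈ ℚ_p. Among the three real numbers ‖(x₁−x₂)(x₃−x₄)‖_p, ‖(x₁−x₃)(x₂−x₄)‖_p, ‖(x₁−x₄)(x₂−x₃)‖_p, the maximum value is attained by at least two of them. In particular, when the four points are pairwise distinct there is a relabelling of the points such that ‖(x₁−x₂)(x₃−x₄)/((x₁−x₃)(x₂−x₄))‖_p ≤ 1 and ‖(x₁−x₄)(x₂−x₃)/((x₁−x₃)(x₂−x₄))‖_p = 1. -/
lemma padic_three_max {p : ℕ} [Fact p.Prime] (a b c : ℚ_[p]) (h : b = a + c) :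
    (‖a‖ = max ‖a‖ (max ‖b‖ ‖c‖) ∧ ‖b‖ = max ‖a‖ (max ‖b‖ ‖c‖)) ∨
    (‖a‖ = max ‖a‖ (max ‖b‖ ‖c‖) ∧ ‖c‖ = max ‖a‖ (max ‖b‖ ‖c‖)) ∨
    (‖b‖ = max ‖a‖ (max ‖b‖ ‖c‖) ∧ ‖c‖ = max ‖a‖ (max ‖b‖ ‖c‖)) := by
  have hb' : ‖b‖ ≤ max ‖a‖ ‖c‖ := by rw [h]; exact Padic.nonarchimedean a c
  by_cases hac : ‖a‖ = ‖c‖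
  · have hba : ‖b‖ ≤ ‖a‖ := by rwa [← hac, max_self] at hb'
    right; left
    constructor
    · rw [max_eq_left (max_le hba hac.ge)]
    · rw [← hac, max_eq_left (max_le hba le_rfl)]
  · have hB : ‖b‖ = max ‖a‖ ‖c‖ := by rw [h]; exact Padic.add_eq_max_of_ne hac
    rcases le_total ‖a‖ ‖c‖ with hle | hle
    · have hBc : ‖b‖ = ‖c‖ := by rw [hB, max_eq_right hle]
      right; right
      have hM : max ‖a‖ (max ‖b‖ ‖c‖) = ‖c‖ := by
        rw [hBc, max_self, max_eq_right hle]
      exact ⟨by rw [hM, hBc], hM.symm⟩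
    · have hBa : ‖b‖ = ‖a‖ := by rw [hB, max_eq_left hle]
      left
      have hM : max ‖a‖ (max ‖b‖ ‖c‖) = ‖a‖ := by
        rw [hBa, max_eq_left hle, max_self]
      exact ⟨hM.symm, by rw [hM, hBa]⟩

lemma padic_quot_le {p : ℕ} [Fact p.Prime] (u v : ℚ_[p]) (h : ‖u‖ ≤ ‖v‖) :
    ‖u / v‖ ≤ 1 := by
  rw [norm_div]
  exact div_le_one_of_le₀ h (norm_nonneg v)

lemma padic_quot_eq {p : ℕ} [Fact p.Prime] (u v : ℚ_[p]) (hv : v ≠ 0)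
    (h : ‖u‖ = ‖v‖) : ‖u / v‖ = 1 := by
  rw [norm_div, h, div_self (norm_ne_zero_iff.mpr hv)]


/-- Ultrametricity of p-adic cross-ratios: among the three products of p-adic norms
`‖(x₁−x₂)(x₃−x₄)‖`, `‖(x₁−x₃)(x₂−x₄)‖`, `‖(x₁−x₄)(x₂−x₃)‖` the maximum is attained by at
least two of them.  In particular, when the four points are pairwise distinct, there is a
relabelling of the points so that the cross-ratio `(x₁−x₂)(x₃−x₄)/((x₁−x₃)(x₂−x₄))` has
norm at most `1` while `(x₁−x₄)(x₂−x₃)/((x₁−x₃)(x₂−x₄))` has norm exactly `1`. -/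
theorem padic_cross_ratio_ultrametric
    (p : ℕ) [hp : Fact p.Prime] (x : Fin 4 → ℚ_[p]) :
    (let A := ‖(x 0 - x 1) * (x 2 - x 3)‖
     let B := ‖(x 0 - x 2) * (x 1 - x 3)‖
     let C := ‖(x 0 - x 3) * (x 1 - x 2)‖
     (A = max A (max B C) ∧ B = max A (max B C)) ∨
     (A = max A (max B C) ∧ C = max A (max B C)) ∨
     (B = max A (max B C) ∧ C = max A (max B C))) ∧
    (Function.Injective x →
      ∃ σ : Equiv.Perm (Fin 4),
        ‖(x (σ 0) - x (σ 1)) * (x (σ 2) - x (σ 3)) /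
            ((x (σ 0) - x (σ 2)) * (x (σ 1) - x (σ 3)))‖ ≤ 1 ∧
        ‖(x (σ 0) - x (σ 3)) * (x (σ 1) - x (σ 2)) /
            ((x (σ 0) - x (σ 2)) * (x (σ 1) - x (σ 3)))‖ = 1) := by
  have hkey : (x 0 - x 2) * (x 1 - x 3) =
      (x 0 - x 1) * (x 2 - x 3) + (x 0 - x 3) * (x 1 - x 2) := by ring
  have H := padic_three_max _ _ _ hkey
  refine ⟨H, ?_⟩
  intro hinj
  have h01 : x 0 - x 1 ≠ 0 := sub_ne_zero.mpr (hinj.ne (by decide))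
  have h12 : x 1 - x 2 ≠ 0 := sub_ne_zero.mpr (hinj.ne (by decide))
  have h23 : x 2 - x 3 ≠ 0 := sub_ne_zero.mpr (hinj.ne (by decide))
  have h02 : x 0 - x 2 ≠ 0 := sub_ne_zero.mpr (hinj.ne (by decide))
  have h13 : x 1 - x 3 ≠ 0 := sub_ne_zero.mpr (hinj.ne (by decide))
  have h03 : x 0 - x 3 ≠ 0 := sub_ne_zero.mpr (hinj.ne (by decide))
  set A := ‖(x 0 - x 1) * (x 2 - x 3)‖ with hA
  set B := ‖(x 0 - x 2) * (x 1 - x 3)‖ with hB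
  set C := ‖(x 0 - x 3) * (x 1 - x 2)‖ with hC
  have hCmax : C ≤ max A (max B C) := le_max_of_le_right (le_max_right _ _)
  have hBmax : B ≤ max A (max B C) := le_max_of_le_right (le_max_left _ _)
  have hAmax : A ≤ max A (max B C) := le_max_left _ _
  rcases H with ⟨h1, h2⟩ | ⟨h1, h2⟩ | ⟨h1, h2⟩
  · -- A = B = max : σ = swap 0 2
    refine ⟨Equiv.swap 0 2, ?_, ?_⟩
    · have e0 : (Equiv.swap (0:Fin 4) 2) 0 = 2 := by decide
      have e1 : (Equiv.swap (0:Fin 4) 2) 1 = 1 := by decide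
      have e2 : (Equiv.swap (0:Fin 4) 2) 2 = 0 := by decide
      have e3 : (Equiv.swap (0:Fin 4) 2) 3 = 3 := by decide
      rw [e0, e1, e2, e3]
      apply padic_quot_le
      have hnum : ‖(x 2 - x 1) * (x 0 - x 3)‖ = C := by
        rw [hC, norm_mul, norm_mul, norm_sub_rev (x 2), mul_comm]
      have hden : ‖(x 2 - x 0) * (x 1 - x 3)‖ = B := by
        rw [hB, norm_mul, norm_mul, norm_sub_rev (x 2)]
      rw [hnum, hden]
      exact hCmax.trans h2.ge
    · have e0 : (Equiv.swap (0:Fin 4) 2) 0 = 2 := by decide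
      have e1 : (Equiv.swap (0:Fin 4) 2) 1 = 1 := by decide
      have e2 : (Equiv.swap (0:Fin 4) 2) 2 = 0 := by decide
      have e3 : (Equiv.swap (0:Fin 4) 2) 3 = 3 := by decide
      rw [e0, e1, e2, e3]
      apply padic_quot_eq _ _ (mul_ne_zero (sub_ne_zero.mpr (sub_ne_zero.mp h02).symm) h13)
      have hnum : ‖(x 2 - x 3) * (x 1 - x 0)‖ = A := by
        rw [hA, norm_mul, norm_mul, norm_sub_rev (x 1), mul_comm]
      have hden : ‖(x 2 - x 0) * (x 1 - x 3)‖ = B := by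
        rw [hB, norm_mul, norm_mul, norm_sub_rev (x 2)]
      rw [hnum, hden]
      exact h1.trans h2.symm
  · -- A = C = max : σ = swap 1 2
    refine ⟨Equiv.swap 1 2, ?_, ?_⟩
    · have e0 : (Equiv.swap (1:Fin 4) 2) 0 = 0 := by decide
      have e1 : (Equiv.swap (1:Fin 4) 2) 1 = 2 := by decide
      have e2 : (Equiv.swap (1:Fin 4) 2) 2 = 1 := by decide
      have e3 : (Equiv.swap (1:Fin 4) 2) 3 = 3 := by decide
      rw [e0, e1, e2, e3]
      apply padic_quot_le
      show B ≤ A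
      rw [h1]; exact hBmax
    · have e0 : (Equiv.swap (1:Fin 4) 2) 0 = 0 := by decide
      have e1 : (Equiv.swap (1:Fin 4) 2) 1 = 2 := by decide
      have e2 : (Equiv.swap (1:Fin 4) 2) 2 = 1 := by decide
      have e3 : (Equiv.swap (1:Fin 4) 2) 3 = 3 := by decide
      rw [e0, e1, e2, e3]
      apply padic_quot_eq _ _ (mul_ne_zero h01 h23)
      have hnum : ‖(x 0 - x 3) * (x 2 - x 1)‖ = C := by
        rw [hC, norm_mul, norm_mul, norm_sub_rev (x 2)]
      rw [hnum, ← hA]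
      exact h2.trans h1.symm
  · -- B = C = max : σ = 1
    refine ⟨1, ?_, ?_⟩
    · show ‖(x 0 - x 1) * (x 2 - x 3) / ((x 0 - x 2) * (x 1 - x 3))‖ ≤ 1
      apply padic_quot_le
      show A ≤ B
      rw [h1]; exact hAmax
    · show ‖(x 0 - x 3) * (x 1 - x 2) / ((x 0 - x 2) * (x 1 - x 3))‖ = 1
      apply padic_quot_eq _ _ (mul_ne_zero h02 h13)
      show C = B
      exact h2.trans h1.symm
end

section
/- Let K be a field, let W and W' be finite-dimensional K-vector spaces carrying nondegenerate alternating bilinear forms ω and ω', and let V = W × W' with the symplectic form Ω((w₁,w₁'),(w₂,w₂')) = ω(w₁,w₂) + ω'(w₁',w₂'). Then for every Lagrangian subspace L ≤ V one has 2·(dim(L ∩ (0 × W')) − dim(L ∩ (W × 0))) = dim W' − dim W. In particular, if dim W = dim W', then the subspaces L ∩ (W × 0) and L ∩ (0 × W') have equal dimension. -/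
/-!
Let `π : W × W' → W` be the projection. On `L` its kernel is `L ∩ (0 × W')`, so
`dim π(L) = dim L - dim (L ∩ (0 × W'))`. Because `L` is its own `Ω`-orthogonal, a vector `w`
is `ω`-orthogonal to `π(L)` exactly when `(w, 0) ∈ L`; hence the `ω`-orthogonal of `π(L)` is
`π(L ∩ (W × 0)) ≅ L ∩ (W × 0)`, and `dim (L ∩ (W × 0)) = dim W - dim π(L)`.
With `2 dim L = dim W + dim W'` the identity follows.
-/

open Module
open LinearMap (BilinForm)

namespace Submodule

variable {K V V' : Type*} [DivisionRing K] [AddCommGroup V] [Module K V] [AddCommGroup V']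
  [Module K V']

theorem finrank_map_add_finrank_inf_ker (p : Submodule K V) [FiniteDimensional K p]
    (f : V →ₗ[K] V') :
    finrank K (p.map f) + finrank K ↥(p ⊓ LinearMap.ker f) = finrank K p := by
  rw [← LinearMap.range_domRestrict, ← (f.domRestrict p).finrank_range_add_finrank_ker,
    LinearMap.ker_domRestrict, ← finrank_map_subtype_eq, map_comap_subtype]

end Submodule

theorem LinearMap.ker_fst_eq_bot_prod_top (R M M' : Type*) [Semiring R] [AddCommMonoid M]
    [Module R M] [AddCommMonoid M'] [Module R M'] :
    LinearMap.ker (LinearMap.fst R M M') = (⊥ : Submodule R M).prod ⊤ := by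
  ext
  simp

namespace LinearMap.BilinForm

section Orthogonal

variable {K V : Type*} [Field K] [AddCommGroup V] [Module K V] [FiniteDimensional K V]
  {B : BilinForm K V}

theorem finrank_add_finrank_orthogonal_of_separatingLeft (hB : B.SeparatingLeft)
    (N : Submodule K V) : finrank K N + finrank K (B.orthogonal N) = finrank K V := by
  have := finrank_add_finrank_orthogonal' (B := B) N
  rwa [LinearMap.separatingLeft_iff_ker_eq_bot.mp hB, inf_bot_eq, finrank_bot, add_zero] at this

theorem orthogonal_eq_self_of_le_of_finrank (hB : B.SeparatingLeft) {L : Submodule K V}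
    (hiso : L ≤ B.orthogonal L) (hdim : 2 * finrank K L = finrank K V) :
    B.orthogonal L = L := by
  refine (Submodule.eq_of_le_of_finrank_le hiso ?_).symm
  have := finrank_add_finrank_orthogonal_of_separatingLeft hB L
  omega

end Orthogonal

section Prod

variable {K W W' : Type*} [Field K] [AddCommGroup W] [Module K W] [AddCommGroup W']
  [Module K W']

-- Dot notation `ω.prod ω'` would resolve to `LinearMap.prod`, so this is always applied as
-- `prod ω ω'`.
def prod (ω : BilinForm K W) (ω' : BilinForm K W') : BilinForm K (W × W') :=
  ω.compl₁₂ (LinearMap.fst K W W') (LinearMap.fst K W W') +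
    ω'.compl₁₂ (LinearMap.snd K W W') (LinearMap.snd K W W')

variable {ω : BilinForm K W} {ω' : BilinForm K W'}

@[simp]
theorem prod_apply (u v : W × W') : prod ω ω' u v = ω u.1 v.1 + ω' u.2 v.2 :=
  rfl

theorem SeparatingLeft.prod (h : ω.SeparatingLeft) (h' : ω'.SeparatingLeft) :
    (prod ω ω').SeparatingLeft := fun u hu =>
  Prod.ext (h u.1 fun w => by simpa using hu (w, 0)) (h' u.2 fun w' => by simpa using hu (0, w'))

theorem orthogonal_map_fst_of_orthogonal_eq_self {L : Submodule K (W × W')}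
    (hL : (prod ω ω').orthogonal L = L) :
    ω.orthogonal (L.map (LinearMap.fst K W W')) =
      (L ⊓ (⊤ : Submodule K W).prod ⊥).map (LinearMap.fst K W W') := by
  ext w
  constructor
  · intro hw
    have hmem : ((w, 0) : W × W') ∈ L := by
      rw [← hL]
      intro u hu
      simpa using hw u.1 ⟨u, hu, rfl⟩
    exact ⟨(w, 0), ⟨hmem, by simp⟩, rfl⟩
  · rintro ⟨x, ⟨hxL, -, hx2 : x.2 = 0⟩, rfl⟩ _ ⟨u, hu, rfl⟩
    rw [← hL] at hxL
    simpa [hx2] using hxL u hu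

theorem finrank_inf_prod_top_bot_add_finrank_map_fst [FiniteDimensional K W]
    [FiniteDimensional K W'] (hω : ω.SeparatingLeft) {L : Submodule K (W × W')}
    (hL : (prod ω ω').orthogonal L = L) :
    finrank K ↥(L ⊓ (⊤ : Submodule K W).prod ⊥) + finrank K (L.map (LinearMap.fst K W W')) =
      finrank K W := by
  have hinj := (L ⊓ (⊤ : Submodule K W).prod ⊥).finrank_map_add_finrank_inf_ker
    (LinearMap.fst K W W')
  rw [LinearMap.ker_fst_eq_bot_prod_top, inf_assoc, Submodule.prod_inf_prod, top_inf_eq, bot_inf_eq,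
    Submodule.prod_bot, inf_bot_eq, finrank_bot, add_zero] at hinj
  rw [← hinj, ← orthogonal_map_fst_of_orthogonal_eq_self hL, add_comm]
  exact finrank_add_finrank_orthogonal_of_separatingLeft hω _

end Prod

end LinearMap.BilinForm

open LinearMap.BilinForm in
theorem lagrangian_intersection_dimensions_general
    (K : Type*) [Field K]
    (W W' : Type*) [AddCommGroup W] [Module K W] [AddCommGroup W'] [Module K W']
    [FiniteDimensional K W] [FiniteDimensional K W']
    (ω : W →ₗ[K] W →ₗ[K] K) (ω' : W' →ₗ[K] W' →ₗ[K] K)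
    (hnd : ∀ w, (∀ u, ω w u = 0) → w = 0)
    (hnd' : ∀ w, (∀ u, ω' w u = 0) → w = 0)
    (L : Submodule K (W × W'))
    (hLisot : ∀ u ∈ L, ∀ v ∈ L, ω u.1 v.1 + ω' u.2 v.2 = 0)
    (hLdim : 2 * Module.finrank K ↥L = Module.finrank K (W × W')) :
    2 * ((Module.finrank K ↥(L ⊓ (⊥ : Submodule K W).prod (⊤ : Submodule K W')) : ℤ) -
          (Module.finrank K ↥(L ⊓ (⊤ : Submodule K W).prod (⊥ : Submodule K W')) : ℤ)) =
        (Module.finrank K W' : ℤ) - (Module.finrank K W : ℤ) ∧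
    (Module.finrank K W = Module.finrank K W' →
      Module.finrank K ↥(L ⊓ (⊤ : Submodule K W).prod (⊥ : Submodule K W')) =
        Module.finrank K ↥(L ⊓ (⊥ : Submodule K W).prod (⊤ : Submodule K W'))) := by
  have hLagr : (prod ω ω').orthogonal L = L :=
    orthogonal_eq_self_of_le_of_finrank (SeparatingLeft.prod hnd hnd')
      (fun v hv u hu => hLisot u hu v hv) hLdim
  have hslice := finrank_inf_prod_top_bot_add_finrank_map_fst hnd hLagr
  have hproj := L.finrank_map_add_finrank_inf_ker (LinearMap.fst K W W')
  rw [LinearMap.ker_fst_eq_bot_prod_top] at hproj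
  rw [Module.finrank_prod] at hLdim
  omega

/-- Let `V = W × W'` carry the direct-sum symplectic form built from nondegenerate
alternating forms `ω`, `ω'` on `W`, `W'`.  For every Lagrangian subspace `L` one has
`2·(dim(L ∩ (0 × W')) − dim(L ∩ (W × 0))) = dim W' − dim W`; in particular if
`dim W = dim W'` the two intersections have equal dimension. -/
theorem lagrangian_intersection_dimensions
    (K : Type*) [Field K]
    (W W' : Type*) [AddCommGroup W] [Module K W] [AddCommGroup W'] [Module K W']
    [FiniteDimensional K W] [FiniteDimensional K W']
    (ω : W →ₗ[K] W →ₗ[K] K) (ω' : W' →ₗ[K] W' →ₗ[K] K)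
    (halt : ∀ w, ω w w = 0) (halt' : ∀ w, ω' w w = 0)
    (hnd : ∀ w, (∀ u, ω w u = 0) → w = 0)
    (hnd' : ∀ w, (∀ u, ω' w u = 0) → w = 0)
    (L : Submodule K (W × W'))
    (hLisot : ∀ u ∈ L, ∀ v ∈ L, ω u.1 v.1 + ω' u.2 v.2 = 0)
    (hLdim : 2 * Module.finrank K ↥L = Module.finrank K (W × W')) :
    2 * ((Module.finrank K ↥(L ⊓ (⊥ : Submodule K W).prod (⊤ : Submodule K W')) : ℤ) -
          (Module.finrank K ↥(L ⊓ (⊤ : Submodule K W).prod (⊥ : Submodule K W')) : ℤ)) =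
        (Module.finrank K W' : ℤ) - (Module.finrank K W : ℤ) ∧
    (Module.finrank K W = Module.finrank K W' →
      Module.finrank K ↥(L ⊓ (⊤ : Submodule K W).prod (⊥ : Submodule K W')) =
        Module.finrank K ↥(L ⊓ (⊥ : Submodule K W).prod (⊤ : Submodule K W'))) :=
  lagrangian_intersection_dimensions_general K W W' ω ω' hnd hnd' L hLisot hLdim
end

section
/- For all integers p ≥ 2, Λ ≥ 1, τ ≥ 1 and r, the following identity holds in ℤ: (r + 1 − τ) + τ(r − 2Λ) + (p − 2)·τ·(r + 1 − 2Λ) + ∑_{j=1}^{Λ−1} (p − 1)(p^j − p^{j−1})·τ·(r + 1 − 2Λ + 2j) = (r + 1) + τ · p^{Λ−1} · ((p − 1) r − (p + 1)). -/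
lemma sum_pow_lin (p c : ℤ) : ∀ n : ℕ,
    (p - 1) * ∑ j ∈ Finset.Icc 1 n, (p ^ j - p ^ (j - 1)) * (c + 2 * (j : ℤ)) =
      (p - 1) * c * (p ^ n - 1) + 2 * (p - 1) * n * p ^ n - 2 * (p ^ n - 1) := by
  intro n
  induction n with
  | zero => simp
  | succ m ih =>
    rw [Finset.sum_Icc_succ_top (Nat.le_add_left 1 m)]
    have h1 : m + 1 - 1 = m := rfl
    rw [h1, mul_add, ih]
    push_cast
    ring

/-- The norm identity for the genus-one (p-adic BTZ black hole) holographic state with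
horizon length `τ` and cutoff `Λ`: the sum `∑ M·v_d` over the vertex types of the
quotient tensor network equals `(r+1) + τ·p^{Λ−1}((p−1)r − (p+1))`. -/
theorem genus_one_norm_identity (p r : ℤ) (Λ τ : ℕ)
    (hp : 2 ≤ p) (hΛ : 1 ≤ Λ) (hτ : 1 ≤ τ) :
    (r + 1 - (τ : ℤ)) + (τ : ℤ) * (r - 2 * (Λ : ℤ)) +
        (p - 2) * (τ : ℤ) * (r + 1 - 2 * (Λ : ℤ)) +
        ∑ j ∈ Finset.Icc 1 (Λ - 1),
          (p - 1) * (p ^ j - p ^ (j - 1)) * (τ : ℤ) *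
            (r + 1 - 2 * (Λ : ℤ) + 2 * (j : ℤ)) =
      (r + 1) + (τ : ℤ) * p ^ (Λ - 1) * ((p - 1) * r - (p + 1)) := by
  obtain ⟨m, rfl⟩ : ∃ m, Λ = m + 1 := ⟨Λ - 1, (Nat.succ_pred_eq_of_pos hΛ).symm⟩
  have h1 : m + 1 - 1 = m := rfl
  set c : ℤ := r + 1 - 2 * ((m : ℤ) + 1) with hc
  have hsum : ∑ j ∈ Finset.Icc 1 (m + 1 - 1),
      (p - 1) * (p ^ j - p ^ (j - 1)) * (τ : ℤ) *
        (r + 1 - 2 * ((m + 1 : ℕ) : ℤ) + 2 * (j : ℤ)) =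
      (τ : ℤ) * ((p - 1) * ∑ j ∈ Finset.Icc 1 m, (p ^ j - p ^ (j - 1)) * (c + 2 * (j : ℤ))) := by
    rw [h1, Finset.mul_sum, Finset.mul_sum]
    refine Finset.sum_congr rfl fun j hj => ?_
    push_cast
    ring
  rw [hsum, sum_pow_lin p c m, h1]
  push_cast [hc]
  ring
end

section
/- Let r ≥ 1 and let σ, c, Δ be natural numbers. Write J_N for the N × N all-ones complex matrix and 1_N for the N × N identity. Define ρ(σ,c) = r^{−(σ+c)} · (1_{r^c} ⊗ J_{r^σ}). For any family a of matrices a_v ∈ M_{r^σ}(ℂ) indexed by v ∈ Fin(r^c), one has Tr( ρ(σ,c) · blockDiagonal(a) ) = Tr( ρ' · (1_{r²} ⊗ blockDiagonal(v ↦ 1_{r^Δ} ⊗ a_v)) ), where ρ' = r^{−(σ+Δ+c+2)} · (1_{r²} ⊗ 1_{r^c} ⊗ J'), J' being the all-ones matrix indexed by Fin(r^Δ) × Fin(r^σ), and ⊗ the Kronecker product; both traces equal r^{−(σ+c)} times the sum of all entries of all the a_v. -/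
open scoped Kronecker

/-- The block-diagonal matrix with diagonal blocks `a v`, with the block index as the
first factor of the index type (matching the Kronecker-product convention). -/
noncomputable def blockDiagFst {B N : Type*} [DecidableEq B]
    (a : B → Matrix N N ℂ) : Matrix (B × N) (B × N) ℂ :=
  Matrix.of fun p q => if p.1 = q.1 then a p.1 p.2 q.2 else 0

/-- Compatibility of the holographic density matrices with the unital embeddings of the
AF-algebra (Bratteli diagram) construction: for `ρ = r^{−(σ+c)}·(1_{r^c} ⊗ J_{r^σ})` and
`ρ' = r^{−(σ+Δ+c+2)}·(1_{r²} ⊗ 1_{r^c} ⊗ J')`, and any family `a` of `r^σ × r^σ` blocks,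
`Tr(ρ · blockDiagonal a) = Tr(ρ' · (1_{r²} ⊗ blockDiagonal (v ↦ 1_{r^Δ} ⊗ a v)))`, both
sides being `r^{−(σ+c)}` times the sum of all entries of all the `a v`. -/
theorem af_state_compatibility (r : ℕ) (hr : 1 ≤ r) (σ c Δ : ℕ)
    (a : Fin (r ^ c) → Matrix (Fin (r ^ σ)) (Fin (r ^ σ)) ℂ)
    (ρ : Matrix (Fin (r ^ c) × Fin (r ^ σ)) (Fin (r ^ c) × Fin (r ^ σ)) ℂ)
    (hρ : ρ = ((r : ℂ) ^ (σ + c))⁻¹ •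
      ((1 : Matrix (Fin (r ^ c)) (Fin (r ^ c)) ℂ) ⊗ₖ
        (Matrix.of fun _ _ => (1 : ℂ) : Matrix (Fin (r ^ σ)) (Fin (r ^ σ)) ℂ)))
    (ρ' : Matrix (Fin (r ^ 2) × (Fin (r ^ c) × (Fin (r ^ Δ) × Fin (r ^ σ))))
                 (Fin (r ^ 2) × (Fin (r ^ c) × (Fin (r ^ Δ) × Fin (r ^ σ)))) ℂ)
    (hρ' : ρ' = ((r : ℂ) ^ (σ + Δ + c + 2))⁻¹ •
      ((1 : Matrix (Fin (r ^ 2)) (Fin (r ^ 2)) ℂ) ⊗ₖ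
        ((1 : Matrix (Fin (r ^ c)) (Fin (r ^ c)) ℂ) ⊗ₖ
          (Matrix.of fun _ _ => (1 : ℂ) :
            Matrix (Fin (r ^ Δ) × Fin (r ^ σ)) (Fin (r ^ Δ) × Fin (r ^ σ)) ℂ)))) :
    Matrix.trace (ρ * blockDiagFst a) =
        ((r : ℂ) ^ (σ + c))⁻¹ * ∑ v, ∑ i, ∑ j, a v i j ∧
    Matrix.trace (ρ' * ((1 : Matrix (Fin (r ^ 2)) (Fin (r ^ 2)) ℂ) ⊗ₖ
          blockDiagFst fun v =>
            (1 : Matrix (Fin (r ^ Δ)) (Fin (r ^ Δ)) ℂ) ⊗ₖ a v)) =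
        ((r : ℂ) ^ (σ + c))⁻¹ * ∑ v, ∑ i, ∑ j, a v i j := by
  subst hρ hρ'
  constructor
  · simp only [Matrix.smul_mul, Matrix.trace_smul, smul_eq_mul]
    congr 1
    simp [Matrix.trace, Matrix.diag, Matrix.mul_apply, Matrix.kroneckerMap_apply,
      blockDiagFst, Matrix.one_apply, Fintype.sum_prod_type, ite_and, Finset.sum_ite_eq,
      Finset.mul_sum, Finset.sum_mul]
    exact Finset.sum_congr rfl fun v _ => Finset.sum_comm
  · simp only [Matrix.smul_mul, Matrix.trace_smul, smul_eq_mul]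
    simp [Matrix.trace, Matrix.diag, Matrix.mul_apply, Matrix.kroneckerMap_apply,
      blockDiagFst, Matrix.one_apply, Fintype.sum_prod_type, ite_and, Finset.sum_ite_eq,
      Finset.mul_sum, Finset.sum_mul]
    have hr0 : (r : ℂ) ≠ 0 := by
      exact Nat.cast_ne_zero.mpr (Nat.one_le_iff_ne_zero.mp hr)
    refine Finset.sum_congr rfl fun v _ => Finset.sum_comm.trans ?_
    refine Finset.sum_congr rfl fun i _ => Finset.sum_congr rfl fun j _ => ?_
    field_simp
    ring
end
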